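/- arXiv:1709.02952 — 7 statements merged into one kernel-verified Lean document; each statement's English description precedes it below -/
import Mathlib

section
/- Let $\{D_1,\dots,D_m\}$ be a partition of an abelian group $G$ of order $v$ with $|D_i|=k_i$. Then $\{D_1,\dots,D_m\}$ is a $(v,m;k_1,\dots,k_m;\lambda_1,\dots,\lambda_m)$-GSEDF if and only if each $D_i$ is a $(v,k_i,k_i-\lambda_i)$-difference set in $G$. -/
/-! Because the `D j` partition `G`, for fixed `i` and `g` every `x ∈ D i` has `x - g` in exactly
one part `D j`, so the counts `|Δ(D i, D j)|(g)` summed over all `j` give `k i`. Splitting off the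
term `j = i`, the GSEDF condition `∑_{j ≠ i} |Δ(D i, D j)|(g) = λ i` is therefore equivalent to
`|Δ(D i, D i)|(g) = k i - λ i`. -/

/-- The number of times `g` occurs in the multiset `Δ(A,B) = {x - y : x ∈ A, y ∈ B}`. -/
noncomputable def extDiffCount {G : Type*} [AddCommGroup G] (A B : Finset G) (g : G) : ℕ :=
  letI := Classical.decEq G
  ((A ×ˢ B).filter (fun p => p.1 - p.2 = g)).card

/-- `{D i}` is a `(v, m; k₁,…,k_m; λ₁,…,λ_m)`-GSEDF in the finite abelian group `G`. -/
def IsGSEDF {G : Type*} [AddCommGroup G] [Fintype G] (v m : ℕ)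
    (D : Fin m → Finset G) (k lam : Fin m → ℕ) : Prop :=
  Fintype.card G = v ∧
  (∀ i, (D i).card = k i) ∧
  (∀ i, 0 < k i) ∧ (∀ i, 0 < lam i) ∧
  (∀ i j, i ≠ j → Disjoint (D i) (D j)) ∧
  ∀ i, ∀ g : G, g ≠ 0 →
    (∑ j ∈ Finset.univ.filter (· ≠ i), extDiffCount (D i) (D j) g) = lam i

open Finset Function

lemma extDiffCount_eq_card_filter {G : Type*} [AddCommGroup G] [DecidableEq G]
    (A B : Finset G) (g : G) :
    extDiffCount A B g = #{x ∈ A | x - g ∈ B} := by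
  unfold extDiffCount
  refine card_nbij' Prod.fst (fun x => (x, x - g)) ?_ ?_ ?_ ?_ <;> intro p <;>
    simp only [coe_filter, mem_product, Set.mem_ofPred_eq]
  · rintro ⟨⟨hA, hB⟩, rfl⟩
    simpa using And.intro hA hB
  · exact fun h => by simpa using h
  · rintro ⟨-, rfl⟩
    simp
  · simp

lemma sum_extDiffCount_eq_card {G ι : Type*} [AddCommGroup G] [Fintype ι]
    (A : Finset G) {D : ι → Finset G} (hdisj : Pairwise (Disjoint on D))
    (hcover : ∀ x, ∃ i, x ∈ D i) (g : G) :
    ∑ j, extDiffCount A (D j) g = #A := by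
  classical
  choose part hpart using hcover
  have mem_iff (x : G) (j : ι) : x ∈ D j ↔ part x = j :=
    ⟨fun hx => by_contra fun hne => disjoint_left.mp (hdisj hne) (hpart x) hx,
      fun h => h ▸ hpart x⟩
  simp only [extDiffCount_eq_card_filter, mem_iff]
  exact (card_eq_sum_card_fiberwise fun x _ => mem_coe.mpr (mem_univ (part (x - g)))).symm

lemma extDiffCount_self_add_sum_ne {G ι : Type*} [AddCommGroup G] [Fintype ι] [DecidableEq ι]
    {D : ι → Finset G} (hdisj : Pairwise (Disjoint on D))
    (hcover : ∀ x, ∃ i, x ∈ D i) (i : ι) (g : G) :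
    extDiffCount (D i) (D i) g + ∑ j ∈ univ.filter (· ≠ i), extDiffCount (D i) (D j) g
      = #(D i) := by
  rw [filter_ne', add_sum_erase _ (fun j => extDiffCount (D i) (D j) g) (mem_univ i)]
  exact sum_extDiffCount_eq_card (D i) hdisj hcover g

/-- for a partition of `G`, GSEDF iff each `D i` is a `(v, k i, k i - lam i)`-difference
set (the condition is stated subtraction-free). -/
theorem gsedf_iff_diffSet {G : Type*} [AddCommGroup G] [Fintype G] (v m : ℕ)
    (D : Fin m → Finset G) (k lam : Fin m → ℕ)
    (hv : Fintype.card G = v)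
    (hcard : ∀ i, (D i).card = k i)
    (hk : ∀ i, 0 < k i) (hlam : ∀ i, 0 < lam i)
    (hdisj : ∀ i j, i ≠ j → Disjoint (D i) (D j))
    (hcover : ∀ x : G, ∃ i, x ∈ D i) :
    IsGSEDF v m D k lam ↔
      ∀ i, ∀ g : G, g ≠ 0 → extDiffCount (D i) (D i) g + lam i = k i := by
  have hsplit i g := hcard i ▸ extDiffCount_self_add_sum_ne hdisj hcover i g
  constructor
  · rintro ⟨-, -, -, -, -, hlam_eq⟩ i g hg
    rw [← hlam_eq i g hg]
    exact hsplit i g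
  · intro hdiff
    refine ⟨hv, hcard, hk, hlam, hdisj, fun i g hg => ?_⟩
    have h_split := hsplit i g
    have h_diff := hdiff i g hg
    omega
end

section
/- Let $m\ge 3$, $k=k_1+\dots+k_m$ with $k_1\le\dots\le k_m$ positive integers, $v>1$, and suppose positive integers $\lambda_1,\dots,\lambda_m$ satisfy $\lambda_i(v-1)=k_i(k-k_i)$ for all $i$. Then $\lambda_1+\lambda_2+\dots+\lambda_{m-1} > \lambda_m$. -/
/-!
Put `K = ∑ kⱼ` and `S = K - k_m`. Multiplied by `v - 1`, the claim reads
`k_m S < ∑_{i ≠ m} kᵢ (K - kᵢ)`. With at least three positive parts, every `i ≠ m` has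
`K - kᵢ ≥ k_m + 1`, so the right side is at least `S (k_m + 1) > S k_m`.
-/

open Finset

namespace Finset

variable {ι : Type*} [Fintype ι] [DecidableEq ι] {k : ι → ℕ}

theorem add_lt_sum_of_ne (hk : ∀ j, 0 < k j) (hι : 3 ≤ Fintype.card ι) {i l : ι}
    (hil : i ≠ l) : k i + k l < ∑ j, k j := by
  have hcard : #{i, l} < #(univ : Finset ι) := by
    rw [card_univ]
    exact (card_le_two).trans_lt (by omega)
  obtain ⟨j, -, hj⟩ := exists_mem_notMem_of_card_lt_card hcard
  rw [← sum_pair hil]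
  exact sum_lt_sum_of_subset (subset_univ _) (mem_univ j) hj (hk j) fun _ _ _ ↦ Nat.zero_le _

theorem mul_sub_lt_sum_erase_mul_sub (hk : ∀ j, 0 < k j) (hι : 3 ≤ Fintype.card ι) (l : ι) :
    k l * (∑ j, k j - k l) < ∑ i ∈ univ.erase l, k i * (∑ j, k j - k i) := by
  set K := ∑ j, k j
  set S := ∑ i ∈ univ.erase l, k i
  have hKS : K = S + k l := (sum_erase_add _ _ (mem_univ l)).symm
  have hS : 0 < S := by
    obtain ⟨i, hil⟩ := Fintype.exists_ne_of_one_lt_card (by omega) l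
    have := add_lt_sum_of_ne hk hι hil
    have := hk i
    omega
  have hgap : ∀ i ∈ univ.erase l, k l + 1 ≤ K - k i := fun i hi ↦ by
    have := add_lt_sum_of_ne hk hι (ne_of_mem_erase hi)
    omega
  calc k l * (K - k l) = S * k l := by rw [hKS, Nat.add_sub_cancel, mul_comm]
    _ < S * (k l + 1) := Nat.mul_lt_mul_of_pos_left (Nat.lt_succ_self _) hS
    _ = ∑ i ∈ univ.erase l, k i * (k l + 1) := sum_mul _ _ _
    _ ≤ ∑ i ∈ univ.erase l, k i * (K - k i) :=
      sum_le_sum fun i hi ↦ Nat.mul_le_mul_left _ (hgap i hi)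

end Finset

/-- from the GSEDF parameter equations with `m ≥ 3` and `k₁ ≤ … ≤ k_m`,
`λ₁ + ⋯ + λ_{m-1} > λ_m`. -/
theorem gsedf_lambda_sum_gt (v m : ℕ) (hm : 3 ≤ m)
    (k lam : Fin m → ℕ)
    (hk : ∀ i, 0 < k i)
    (heq : ∀ i, lam i * (v - 1) = k i * ((∑ j, k j) - k i)) :
    lam ⟨m - 1, by omega⟩ <
      ∑ i ∈ Finset.univ.filter (· ≠ (⟨m - 1, by omega⟩ : Fin m)), lam i := by
  set L : Fin m := ⟨m - 1, by omega⟩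
  rw [filter_ne']
  refine Nat.lt_of_mul_lt_mul_right (a := v - 1) ?_
  rw [heq L, sum_mul, sum_congr rfl fun i _ ↦ heq i]
  exact mul_sub_lt_sum_erase_mul_sub hk (by simpa using hm) L
end

section
/- Let $x_1,\dots,x_n$ be positive real numbers with $n\ge 2$. Then $\sqrt{1+x_1}+\sqrt{1+x_2}+\dots+\sqrt{1+x_n} > n-1+\sqrt{1+x_1+x_2+\dots+x_n}$. -/
/-!
The function `t ↦ √(1 + t) - 1` vanishes at `0` and is subadditive on `[0, ∞)`, strictly so on
`(0, ∞)`. Splitting off one coordinate and using subadditivity on the others,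
`√(1 + ∑ xᵢ) - 1 < (√(1 + x₀) - 1) + ∑_{i ≠ 0} (√(1 + xᵢ) - 1)`, the strictness coming from
`n ≥ 2`, which makes the remaining sum positive.
-/

open Finset

namespace Real

lemma sqrt_one_add_add_sqrt_one_add_sub_one_sq {a b : ℝ} (ha : -1 ≤ a) (hb : -1 ≤ b) :
    (√(1 + a) + √(1 + b) - 1) ^ 2 = 1 + (a + b) + 2 * ((√(1 + a) - 1) * (√(1 + b) - 1)) := by
  linear_combination sq_sqrt (by linarith : 0 ≤ 1 + a) + sq_sqrt (by linarith : 0 ≤ 1 + b)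

lemma sqrt_one_add_add_le {a b : ℝ} (ha : 0 ≤ a) (hb : 0 ≤ b) :
    √(1 + (a + b)) ≤ √(1 + a) + √(1 + b) - 1 := by
  have hu : 1 ≤ √(1 + a) := one_le_sqrt.mpr (by linarith)
  have hv : 1 ≤ √(1 + b) := one_le_sqrt.mpr (by linarith)
  rw [sqrt_le_iff, sqrt_one_add_add_sqrt_one_add_sub_one_sq (by linarith) (by linarith)]
  refine ⟨by linarith, le_add_of_nonneg_right ?_⟩
  exact mul_nonneg zero_le_two (mul_nonneg (sub_nonneg.mpr hu) (sub_nonneg.mpr hv))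

lemma sqrt_one_add_add_lt {a b : ℝ} (ha : 0 < a) (hb : 0 < b) :
    √(1 + (a + b)) < √(1 + a) + √(1 + b) - 1 := by
  have hu : 1 < √(1 + a) := (lt_sqrt zero_le_one).mpr (by norm_num [ha])
  have hv : 1 < √(1 + b) := (lt_sqrt zero_le_one).mpr (by norm_num [hb])
  rw [sqrt_lt' (by linarith),
    sqrt_one_add_add_sqrt_one_add_sub_one_sq (by linarith) (by linarith)]
  exact lt_add_of_pos_right _ (mul_pos two_pos (mul_pos (sub_pos.mpr hu) (sub_pos.mpr hv)))

lemma sqrt_one_add_sum_sub_one_le {ι : Type*} (s : Finset ι) (x : ι → ℝ)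
    (hx : ∀ i ∈ s, 0 ≤ x i) :
    √(1 + ∑ i ∈ s, x i) - 1 ≤ ∑ i ∈ s, (√(1 + x i) - 1) :=
  le_sum_of_subadditive_on_pred (fun t ↦ √(1 + t) - 1) (0 ≤ ·) (by simp)
    (fun a b ha hb ↦ by linarith [sqrt_one_add_add_le ha hb]) (fun _ _ ↦ add_nonneg) x hx

end Real

/-- for positive reals `x₁, …, x_n` with `n ≥ 2`,
`√(1+x₁) + ⋯ + √(1+x_n) > n - 1 + √(1 + x₁ + ⋯ + x_n)`. -/
theorem sqrt_one_add_sum (n : ℕ) (hn : 2 ≤ n) (x : Fin n → ℝ)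
    (hx : ∀ i, 0 < x i) :
    (n : ℝ) - 1 + Real.sqrt (1 + ∑ i, x i) < ∑ i, Real.sqrt (1 + x i) := by
  let i₀ : Fin n := ⟨0, by omega⟩
  have hrest : 0 < ∑ i ∈ univ.erase i₀, x i := by
    refine sum_pos (fun i _ ↦ hx i) ⟨⟨1, by omega⟩, ?_⟩
    simp [i₀, Fin.ext_iff]
  calc (n : ℝ) - 1 + √(1 + ∑ i, x i)
      = n + (√(1 + (x i₀ + ∑ i ∈ univ.erase i₀, x i)) - 1) := by
        rw [add_sum_erase univ x (mem_univ i₀)]; ring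
    _ < n + ((√(1 + x i₀) - 1) + (√(1 + ∑ i ∈ univ.erase i₀, x i) - 1)) := by
        linarith [Real.sqrt_one_add_add_lt (hx i₀) hrest]
    _ ≤ n + ((√(1 + x i₀) - 1) + ∑ i ∈ univ.erase i₀, (√(1 + x i) - 1)) := by
        gcongr
        exact Real.sqrt_one_add_sum_sub_one_le _ x fun i _ ↦ (hx i).le
    _ = n + ∑ i, (√(1 + x i) - 1) := by
        rw [add_sum_erase univ (fun i ↦ √(1 + x i) - 1) (mem_univ i₀)]
    _ = ∑ i, √(1 + x i) := by simp [sum_sub_distrib]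
end

section
/- Let $p_1\ne p_2$ be primes, $m\ge 3$, and $k_1,\dots,k_m$ positive integers with $k=k_1+\dots+k_m\le p_1p_2$. Then there do not exist positive integers $\lambda_1,\dots,\lambda_m$ with $\lambda_i\, p_1p_2 = k_i(k-k_i)$ for all $i$; consequently no $(p_1p_2+1,m;k_1,\dots,k_m;\lambda_1,\dots,\lambda_m)$-GSEDF exists. -/
/-!
Counting the nonzero differences between `D i` and the other blocks gives
`λᵢ (v - 1) = kᵢ (k - kᵢ)`. With `v - 1 = pq` and `0 < kᵢ, k - kᵢ < pq`, one prime divides `kᵢ`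
and the other `k - kᵢ`; by the Chinese remainder theorem this pins `kᵢ` down to one of two values
`a` and `k - a`. As `m ≥ 3`, two blocks of sizes `a` and `k - a` would leave no room for a third, so
all `kᵢ` are equal to `a` and `a ∣ k - a`; but then `pq ∣ k - a`, which is impossible.
-/

open Finset

section DifferenceCounting

variable {G : Type*} [AddCommGroup G]

theorem extDiffCount_zero_of_disjoint {A B : Finset G} (h : Disjoint A B) :
    extDiffCount A B 0 = 0 := by
  classical
  unfold extDiffCount
  rw [filter_congr_decidable, card_eq_zero, filter_eq_empty_iff]
  rintro ⟨a, b⟩ hab hab0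
  rw [mem_product] at hab
  exact disjoint_left.mp h hab.1 (sub_eq_zero.mp hab0 ▸ hab.2)

theorem sum_extDiffCount [Fintype G] (A B : Finset G) :
    ∑ g, extDiffCount A B g = #A * #B := by
  classical
  rw [← card_product, card_eq_sum_card_fiberwise (f := fun x : G × G => x.1 - x.2)
    (t := univ) fun _ _ => mem_univ _]
  rfl

theorem sum_erase_zero_extDiffCount [Fintype G] [DecidableEq G] {A B : Finset G}
    (h : Disjoint A B) : ∑ g ∈ univ.erase 0, extDiffCount A B g = #A * #B := by
  rw [sum_erase _ (extDiffCount_zero_of_disjoint h), sum_extDiffCount]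

theorem IsGSEDF.lam_mul_eq [Fintype G] {v m : ℕ} {D : Fin m → Finset G} {k lam : Fin m → ℕ}
    (h : IsGSEDF v m D k lam) (i : Fin m) :
    lam i * (v - 1) = k i * ((∑ j, k j) - k i) := by
  classical
  obtain ⟨hcard, hD, -, -, hdisj, hcount⟩ := h
  calc lam i * (v - 1)
      = ∑ g ∈ univ.erase 0, ∑ j ∈ univ.filter (· ≠ i), extDiffCount (D i) (D j) g := by
        rw [sum_congr rfl fun g hg => hcount i g (ne_of_mem_erase hg), sum_const,
          card_erase_of_mem (mem_univ _), card_univ, hcard, smul_eq_mul, mul_comm]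
    _ = ∑ j ∈ univ.erase i, ∑ g ∈ univ.erase 0, extDiffCount (D i) (D j) g := by
        rw [sum_comm, filter_ne']
    _ = ∑ j ∈ univ.erase i, k i * k j :=
        sum_congr rfl fun j hj => by
          rw [sum_erase_zero_extDiffCount (hdisj i j (ne_of_mem_erase hj).symm), hD, hD]
    _ = k i * ((∑ j, k j) - k i) := by
        rw [← mul_sum, Nat.eq_sub_of_add_eq (sum_erase_add _ _ (mem_univ i))]

end DifferenceCounting

theorem IsCoprime.eq_zero_of_dvd_of_dvd_of_abs_lt {p q z : ℤ} (h : IsCoprime p q)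
    (hp : p ∣ z) (hq : q ∣ z) (hz : |z| < p * q) : z = 0 :=
  Int.eq_zero_of_abs_lt_dvd (h.mul_dvd hp hq) hz

theorem dvd_and_dvd_or_of_mul_dvd_mul {p q : ℕ} (hp : p.Prime) (hq : q.Prime) (hpq : p ≠ q)
    {a b : ℤ} (ha : 0 < a) (ha' : a < p * q) (hb : 0 < b) (hb' : b < p * q)
    (h : (p * q : ℤ) ∣ a * b) :
    ((p : ℤ) ∣ a ∧ (q : ℤ) ∣ b) ∨ ((q : ℤ) ∣ a ∧ (p : ℤ) ∣ b) := by
  have hcop : IsCoprime (p : ℤ) q := ((Nat.coprime_primes hp hq).2 hpq).isCoprime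
  have not_both : ∀ c : ℤ, 0 < c → c < p * q → ¬ ((p : ℤ) ∣ c ∧ (q : ℤ) ∣ c) :=
    fun c hc hc' ⟨hpc, hqc⟩ => hc.ne' (hcop.eq_zero_of_dvd_of_dvd_of_abs_lt hpc hqc
      (by rwa [abs_of_pos hc]))
  have hpab := (Nat.prime_iff_prime_int.1 hp).dvd_or_dvd (dvd_of_mul_right_dvd h)
  have hqab := (Nat.prime_iff_prime_int.1 hq).dvd_or_dvd (dvd_of_mul_left_dvd h)
  have := not_both a ha ha'
  have := not_both b hb hb'
  tauto

theorem eq_or_eq_sub_of_mul_dvd {p q : ℕ} (hp : p.Prime) (hq : q.Prime) (hpq : p ≠ q)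
    {K a b : ℤ} (hK : K ≤ p * q) (ha : 0 < a) (haK : a < K) (hb : 0 < b) (hbK : b < K)
    (hda : (p * q : ℤ) ∣ a * (K - a)) (hdb : (p * q : ℤ) ∣ b * (K - b)) :
    b = a ∨ b = K - a := by
  have hcop : IsCoprime (p : ℤ) q := ((Nat.coprime_primes hp hq).2 hpq).isCoprime
  have small : ∀ z : ℤ, (p : ℤ) ∣ z → (q : ℤ) ∣ z → -K < z → z < K → z = 0 :=
    fun z hpz hqz hl hu =>
      hcop.eq_zero_of_dvd_of_dvd_of_abs_lt hpz hqz (abs_lt.2 ⟨by linarith, by linarith⟩)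
  have dvd_sub' : ∀ {d x y z : ℤ}, d ∣ x → d ∣ y → z = x - y → d ∣ z :=
    fun hx hy hz => hz ▸ dvd_sub hx hy
  rcases dvd_and_dvd_or_of_mul_dvd_mul hp hq hpq ha (by linarith) (by linarith) (by linarith) hda
    with ⟨hpa, hqa⟩ | ⟨hqa, hpa⟩ <;>
  rcases dvd_and_dvd_or_of_mul_dvd_mul hp hq hpq hb (by linarith) (by linarith) (by linarith) hdb
    with ⟨hpb, hqb⟩ | ⟨hqb, hpb⟩
  · left
    linarith [small (b - a) (dvd_sub' hpb hpa rfl) (dvd_sub' hqa hqb (by ring))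
      (by linarith) (by linarith)]
  · right
    linarith [small (b - (K - a)) (dvd_sub' hpa hpb (by ring)) (dvd_sub' hqb hqa rfl)
      (by linarith) (by linarith)]
  · right
    linarith [small (b - (K - a)) (dvd_sub' hpb hpa rfl) (dvd_sub' hqa hqb (by ring))
      (by linarith) (by linarith)]
  · left
    linarith [small (b - a) (dvd_sub' hpa hpb (by ring)) (dvd_sub' hqb hqa rfl)
      (by linarith) (by linarith)]

theorem not_dvd_sub_of_mul_dvd {p q : ℕ} (hp : p.Prime) (hq : q.Prime) (hpq : p ≠ q)
    {K a : ℤ} (hK : K ≤ p * q) (ha : 0 < a) (haK : a < K) (hda : (p * q : ℤ) ∣ a * (K - a)) :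
    ¬ a ∣ K - a := by
  intro hdvd
  have hcop : IsCoprime (p : ℤ) q := ((Nat.coprime_primes hp hq).2 hpq).isCoprime
  have hsub : K - a ≠ 0 := by linarith
  have habs : |K - a| < p * q := by rw [abs_of_pos (by linarith)]; linarith
  rcases dvd_and_dvd_or_of_mul_dvd_mul hp hq hpq ha (by linarith) (by linarith) (by linarith) hda
    with ⟨hpa, hqa⟩ | ⟨hqa, hpa⟩
  · exact hsub (hcop.eq_zero_of_dvd_of_dvd_of_abs_lt (hpa.trans hdvd) hqa habs)
  · exact hsub (hcop.eq_zero_of_dvd_of_dvd_of_abs_lt hpa (hqa.trans hdvd) habs)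

theorem forall_eq_of_forall_eq_or_eq_sum_sub {ι : Type*} [Fintype ι] [DecidableEq ι]
    (hι : 3 ≤ Fintype.card ι) {k : ι → ℕ} (hk : ∀ i, 0 < k i)
    (h : ∀ i j, k j = k i ∨ k j = (∑ l, k l) - k i) (i j : ι) : k i = k j := by
  rcases h i j with hji | hji
  · exact hji.symm
  by_contra hne
  have hij : i ≠ j := fun hij => hne (hij ▸ rfl)
  obtain ⟨s, -, hs⟩ := exists_mem_notMem_of_card_lt_card (s := {i, j}) (t := univ)
    (by rw [card_univ]; exact card_le_two.trans_lt (by omega))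
  have : k s + (k i + k j) ≤ ∑ l, k l := by
    rw [← sum_pair hij, ← sum_insert hs]
    exact sum_le_sum_of_subset (subset_univ _)
  have := hk s
  have := hk j
  omega

theorem not_forall_mul_dvd_mul_sum_sub {p q m : ℕ} (hp : p.Prime) (hq : q.Prime) (hpq : p ≠ q)
    (hm : 3 ≤ m) {k : Fin m → ℕ} (hk : ∀ i, 0 < k i) (hsum : ∑ i, k i ≤ p * q) :
    ¬ ∀ i, p * q ∣ k i * ((∑ j, k j) - k i) := by
  intro hdvd
  set K := ∑ j, k j
  have hlt : ∀ i, k i < K := fun i => by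
    have : Nontrivial (Fin m) := Fin.nontrivial_iff_two_le.2 (by omega)
    obtain ⟨j, hj⟩ := exists_ne i
    exact single_lt_sum hj (mem_univ _) (mem_univ _) (hk j) fun _ _ _ => Nat.zero_le _
  have hdvdZ : ∀ i, (p * q : ℤ) ∣ k i * ((K : ℤ) - k i) := fun i => by
    have := Int.natCast_dvd_natCast.2 (hdvd i)
    push_cast [Nat.cast_sub (hlt i).le] at this
    exact this
  have hK : (K : ℤ) ≤ p * q := by exact_mod_cast hsum
  have hpair : ∀ i j, k j = k i ∨ k j = K - k i := fun i j => by
    have := eq_or_eq_sub_of_mul_dvd hp hq hpq hK (by exact_mod_cast hk i)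
      (by exact_mod_cast hlt i) (by exact_mod_cast hk j) (by exact_mod_cast hlt j)
      (hdvdZ i) (hdvdZ j)
    omega
  let i₀ : Fin m := ⟨0, by omega⟩
  have hKi₀ : K = m * k i₀ := by
    simp only [K, forall_eq_of_forall_eq_or_eq_sum_sub (by simpa using hm) hk hpair _ i₀,
      sum_const, card_univ, Fintype.card_fin, smul_eq_mul]
  refine not_dvd_sub_of_mul_dvd hp hq hpq hK (by exact_mod_cast hk i₀)
    (by exact_mod_cast hlt i₀) (hdvdZ i₀) ⟨m - 1, ?_⟩
  rw [hKi₀]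
  push_cast [Nat.cast_sub (by omega : 1 ≤ m)]
  ring

/-- nonexistence of `(p₁p₂+1, m; ...)`-GSEDF parameters for distinct primes
`p₁ ≠ p₂`, `m ≥ 3`, `k_1 + ... + k_m ≤ p₁p₂`, and of the GSEDF itself. -/
theorem gsedf_nonexistence_two_primes (p1 p2 m : ℕ) (hp1 : p1.Prime) (hp2 : p2.Prime)
    (hne : p1 ≠ p2) (hm : 3 ≤ m)
    (k : Fin m → ℕ) (hk : ∀ i, 0 < k i) (hsum : (∑ i, k i) ≤ p1 * p2) :
    (¬ ∃ lam : Fin m → ℕ, (∀ i, 0 < lam i) ∧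
        ∀ i, lam i * (p1 * p2) = k i * ((∑ j, k j) - k i)) ∧
    ∀ (G : Type) [AddCommGroup G] [Fintype G]
      (D : Fin m → Finset G) (lam : Fin m → ℕ),
        ¬ IsGSEDF (p1 * p2 + 1) m D k lam := by
  have hparams : ¬ ∃ lam : Fin m → ℕ, (∀ i, 0 < lam i) ∧
      ∀ i, lam i * (p1 * p2) = k i * ((∑ j, k j) - k i) := by
    rintro ⟨lam, -, hlam⟩
    exact not_forall_mul_dvd_mul_sum_sub hp1 hp2 hne hm hk hsum fun i =>
      Dvd.intro_left _ (hlam i)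
  refine ⟨hparams, fun G _ _ D lam h => hparams ⟨lam, h.2.2.2.1, fun i => ?_⟩⟩
  simpa using h.lam_mul_eq i
end

section
/- Suppose a $(v,3;k_1,k_2,k_3;\lambda_1,\lambda_2,\lambda_3)$-GSEDF exists with $k_1+k_2+k_3=v$, and either two of $k_1,k_2,k_3$ are equal or some $k_i=1$. Then $v\equiv 3\pmod 4$, $\{k_1,k_2,k_3\}$ is (up to order) $(1,\frac{v-1}{2},\frac{v-1}{2})$, and $(\lambda_1,\lambda_2,\lambda_3)=(1,\frac{v+1}{4},\frac{v+1}{4})$. -/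
/-!
Counting the differences `x - y` with `x ∈ D i` and `y` in another block in two ways gives
`λᵢ (v - 1) = kᵢ (v - kᵢ)`, so every `kᵢ` is an idempotent of `ZMod (v - 1)`. If `k₁ = 1`,
then `k₂ ≡ -k₃` are both idempotent, and if `k₁ = k₂ = a`, then `a` and `k₃ ≡ 1 - 2a` are;
in either case `2a ≡ 0 (mod v - 1)`, which for `0 < a < v - 1` forces `2a = v - 1`.
The values of the `λᵢ` then follow from the counting identity.
-/

open Finset

section extDiffCount

variable {G : Type*} [AddCommGroup G]

theorem sum_ne_zero_extDiffCount_of_disjoint [Fintype G] [DecidableEq G] {A B : Finset G}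
    (h : Disjoint A B) : ∑ g ∈ univ.filter (· ≠ 0), extDiffCount A B g = #A * #B := by
  rw [filter_ne', ← sum_extDiffCount, ← add_sum_erase _ _ (mem_univ 0),
    extDiffCount_zero_of_disjoint h, zero_add]

end extDiffCount

namespace IsGSEDF

variable {G : Type*} [AddCommGroup G] [Fintype G] {v m : ℕ} {D : Fin m → Finset G}
  {k lam : Fin m → ℕ}

theorem lam_mul_sub_one (h : IsGSEDF v m D k lam) (i : Fin m) :
    lam i * (v - 1) = k i * ∑ j ∈ univ.filter (· ≠ i), k j := by
  classical
  obtain ⟨hcard, hk, -, -, hdisj, hlam⟩ := h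
  calc lam i * (v - 1)
      = ∑ g ∈ univ.filter (· ≠ (0 : G)), ∑ j ∈ univ.filter (· ≠ i),
          extDiffCount (D i) (D j) g := by
        rw [sum_congr rfl fun g hg => hlam i g (mem_filter.1 hg).2, sum_const, filter_ne',
          card_erase_of_mem (mem_univ _), card_univ, hcard, smul_eq_mul, mul_comm]
    _ = ∑ j ∈ univ.filter (· ≠ i), ∑ g ∈ univ.filter (· ≠ (0 : G)),
          extDiffCount (D i) (D j) g := sum_comm
    _ = ∑ j ∈ univ.filter (· ≠ i), k i * k j := sum_congr rfl fun j hj => by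
        rw [sum_ne_zero_extDiffCount_of_disjoint (hdisj i j (mem_filter.1 hj).2.symm), hk, hk]
    _ = k i * ∑ j ∈ univ.filter (· ≠ i), k j := (mul_sum ..).symm

theorem lam_mul_sub_one_add_mul_self (h : IsGSEDF v m D k lam) (hsum : ∑ i, k i = v)
    (i : Fin m) : lam i * (v - 1) + k i * k i = k i * v := by
  rw [h.lam_mul_sub_one, ← mul_add, filter_ne', sum_erase_add _ _ (mem_univ i), hsum]

end IsGSEDF

theorem isIdempotentElem_natCast_of_mul_add_mul_self {n l a : ℕ}
    (h : l * n + a * a = a * (n + 1)) : IsIdempotentElem (a : ZMod n) := by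
  have := congrArg (Nat.cast : ℕ → ZMod n) h
  push_cast [ZMod.natCast_self] at this
  simpa [IsIdempotentElem] using this

theorem IsIdempotentElem.two_mul_eq_zero_of_neg {R : Type*} [Ring R] {a : R}
    (ha : IsIdempotentElem a) (hna : IsIdempotentElem (-a)) : 2 * a = 0 := by
  rw [IsIdempotentElem, neg_mul_neg, ha.eq] at hna
  rw [two_mul, ← sub_neg_eq_add, ← hna, sub_self]

theorem IsIdempotentElem.two_mul_eq_zero_of_one_sub_two_mul {R : Type*} [Ring R] {a : R}
    (ha : IsIdempotentElem a) (h : IsIdempotentElem (1 - 2 * a)) : 2 * a = 0 := by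
  have hsq : (1 - 2 * a) * (1 - 2 * a) = 1 := by
    have : (1 - 2 * a) * (1 - 2 * a) = 1 - 4 * a + 4 * (a * a) := by noncomm_ring
    rw [this, ha.eq]
    abel
  rw [IsIdempotentElem, hsq] at h
  rw [← sub_eq_self, ← h]

theorem two_mul_eq_of_natCast_eq_zero {n a : ℕ} (h : ((2 * a : ℕ) : ZMod n) = 0) (ha : 0 < a)
    (hlt : a < n) : 2 * a = n :=
  Nat.eq_of_dvd_of_lt_two_mul (by omega) ((ZMod.natCast_eq_zero_iff _ _).1 h) (by omega)

theorem two_mul_eq_of_add_eq {n a b : ℕ} (ha : 0 < a) (hb : 0 < b) (hab : a + b = n)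
    (hia : IsIdempotentElem (a : ZMod n)) (hib : IsIdempotentElem (b : ZMod n)) : 2 * a = n := by
  have hneg : (b : ZMod n) = -a := by
    rw [eq_neg_iff_add_eq_zero, add_comm, ← Nat.cast_add, hab, ZMod.natCast_self]
  rw [hneg] at hib
  exact two_mul_eq_of_natCast_eq_zero (by exact_mod_cast hia.two_mul_eq_zero_of_neg hib) ha
    (by omega)

theorem two_mul_eq_of_two_mul_add_eq {n a c : ℕ} (ha : 0 < a) (hc : 0 < c)
    (hac : 2 * a + c = n + 1) (hia : IsIdempotentElem (a : ZMod n))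
    (hic : IsIdempotentElem (c : ZMod n)) : 2 * a = n := by
  have hone_sub : (c : ZMod n) = 1 - 2 * a := by
    have := congrArg (Nat.cast : ℕ → ZMod n) hac
    push_cast [ZMod.natCast_self] at this
    linear_combination this
  rw [hone_sub] at hic
  exact two_mul_eq_of_natCast_eq_zero
    (by exact_mod_cast hia.two_mul_eq_zero_of_one_sub_two_mul hic) ha (by omega)

theorem four_mul_eq_of_mul_add_mul_self {n l a : ℕ} (h : l * n + a * a = a * (n + 1))
    (ha : 0 < a) (h2a : 2 * a = n) : 4 * l = n + 2 := by
  subst h2a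
  have : a * (2 * l) = a * (a + 1) := by linarith
  have := Nat.eq_of_mul_eq_mul_left ha this
  omega

theorem Fin.exists_perm_apply_one_apply_two {i j : Fin 3} (hij : i ≠ j) :
    ∃ σ : Equiv.Perm (Fin 3), σ 1 = i ∧ σ 2 = j := by
  revert i j
  decide

/-- if a `(v,3;...)`-GSEDF exists with `k₁+k₂+k₃ = v` and either two of the
`k i` equal or some `k i = 1`, then `v ≡ 3 (mod 4)` and, up to order, the parameters are
`(1, (v-1)/2, (v-1)/2; 1, (v+1)/4, (v+1)/4)`. -/
theorem gsedf_three_partition_params {G : Type*} [AddCommGroup G] [Fintype G] (v : ℕ)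
    (D : Fin 3 → Finset G) (k lam : Fin 3 → ℕ)
    (h : IsGSEDF v 3 D k lam)
    (hsum : k 0 + k 1 + k 2 = v)
    (hcond : (∃ i j : Fin 3, i ≠ j ∧ k i = k j) ∨ (∃ i, k i = 1)) :
    v % 4 = 3 ∧
    ∃ σ : Equiv.Perm (Fin 3),
      k (σ 0) = 1 ∧ 2 * k (σ 1) = v - 1 ∧ 2 * k (σ 2) = v - 1 ∧
      lam (σ 0) = 1 ∧ 4 * lam (σ 1) = v + 1 ∧ 4 * lam (σ 2) = v + 1 := by
  have hpos := h.2.2.1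
  obtain ⟨n, rfl⟩ : ∃ n, v = n + 1 := ⟨v - 1, by have := hpos 0; omega⟩
  have hrel (i : Fin 3) : lam i * n + k i * k i = k i * (n + 1) := by
    simpa using h.lam_mul_sub_one_add_mul_self (by rwa [Fin.sum_univ_three]) i
  have hidem (i : Fin 3) := isIdempotentElem_natCast_of_mul_add_mul_self (hrel i)
  have hsumσ (σ : Equiv.Perm (Fin 3)) : k (σ 0) + k (σ 1) + k (σ 2) = n + 1 := by
    calc k (σ 0) + k (σ 1) + k (σ 2) = ∑ i, k (σ i) := by rw [Fin.sum_univ_three]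
      _ = ∑ i, k i := Equiv.sum_comp σ k
      _ = n + 1 := by rwa [Fin.sum_univ_three]
  obtain ⟨σ, hσ⟩ : ∃ σ : Equiv.Perm (Fin 3), k (σ 0) = 1 := by
    rcases hcond with ⟨i, j, hij, hkij⟩ | ⟨i, hi⟩
    · obtain ⟨σ, rfl, rfl⟩ := Fin.exists_perm_apply_one_apply_two hij
      have h2a := two_mul_eq_of_two_mul_add_eq (hpos (σ 1)) (hpos (σ 0))
        (by linarith [hsumσ σ]) (hidem (σ 1)) (hidem (σ 0))
      exact ⟨σ, by linarith [hsumσ σ]⟩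
    · exact ⟨Equiv.swap 0 i, by simpa⟩
  have hk1 := two_mul_eq_of_add_eq (hpos (σ 1)) (hpos (σ 2)) (by linarith [hsumσ σ])
    (hidem (σ 1)) (hidem (σ 2))
  have hk2 := two_mul_eq_of_add_eq (hpos (σ 2)) (hpos (σ 1)) (by linarith [hsumσ σ])
    (hidem (σ 2)) (hidem (σ 1))
  have hl0 : lam (σ 0) = 1 := by
    have h0 := hrel (σ 0)
    rw [hσ] at h0
    exact (mul_eq_right₀ (b := n) (by have := hpos (σ 1); omega)).1 (by linarith)
  have hl1 := four_mul_eq_of_mul_add_mul_self (hrel (σ 1)) (hpos (σ 1)) hk1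
  have hl2 := four_mul_eq_of_mul_add_mul_self (hrel (σ 2)) (hpos (σ 2)) hk2
  refine ⟨by omega, σ, hσ, by omega, by omega, hl0, by omega, by omega⟩
end

section
/- There does not exist a $(v,m;k_1,\dots,k_m;1,1,\dots,1)$-GSEDF with $m\ge 3$ and $k_i>1$ for some $i$. -/
/-!
When all `λ i = 1`, every nonzero `g` is written in exactly one way as `x - z` with `x ∈ D i` and
`z` in the union of the other blocks. Take `a ≠ b` in `D i`. For every other block `D j`, the
representation of `a - b` from `D j` must have its subtrahend in `D i` (otherwise `a - u = b - w`
would be two representations from `D i`), so `b - a = w - u` with `w ∈ D i`, `u ∈ D j`. Two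
distinct blocks `D j₁`, `D j₂` other than `D i` then give two representations of `b - a` from
`D i` with subtrahends in disjoint blocks, a contradiction; hence `m ≥ 3` forces all `|D i| ≤ 1`.
-/

open Finset Function

section ExtDiffCount

variable {G : Type*} [AddCommGroup G] {A B : Finset G} {g : G}

theorem extDiffCount_ne_zero_iff :
    extDiffCount A B g ≠ 0 ↔ ∃ x ∈ A, ∃ z ∈ B, x - z = g := by
  simp [extDiffCount]

theorem eq_and_eq_of_extDiffCount_le_one (h : extDiffCount A B g ≤ 1) {x₁ x₂ z₁ z₂ : G}
    (hx₁ : x₁ ∈ A) (hz₁ : z₁ ∈ B) (h₁ : x₁ - z₁ = g)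
    (hx₂ : x₂ ∈ A) (hz₂ : z₂ ∈ B) (h₂ : x₂ - z₂ = g) : x₁ = x₂ ∧ z₁ = z₂ := by
  classical
  have := card_le_one.mp h (x₁, z₁) (by simp [hx₁, hz₁, h₁]) (x₂, z₂)
    (by simp [hx₂, hz₂, h₂])
  exact Prod.ext_iff.mp this

theorem extDiffCount_eq_card_filter_s13 [DecidableEq G] :
    extDiffCount A B g = ((A ×ˢ B).filter (fun p => p.1 - p.2 = g)).card := by
  unfold extDiffCount
  congr

theorem extDiffCount_biUnion [DecidableEq G] {ι : Type*} {s : Finset ι} {D : ι → Finset G}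
    (hD : (s : Set ι).PairwiseDisjoint D) :
    extDiffCount A (s.biUnion D) g = ∑ j ∈ s, extDiffCount A (D j) g := by
  simp only [extDiffCount_eq_card_filter_s13]
  rw [← card_biUnion]
  · congr 1
    ext ⟨x, z⟩
    simp only [mem_filter, mem_product, mem_biUnion]
    grind
  · intro i hi j hj hij
    exact (disjoint_product.mpr (Or.inr (hD hi hj hij))).mono (filter_subset _ _)
      (filter_subset _ _)

end ExtDiffCount

section Blocks

variable {G ι : Type*} [DecidableEq G] [Fintype ι] [DecidableEq ι]

def otherBlocks (D : ι → Finset G) (i : ι) : Finset G :=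
  (univ.filter (· ≠ i)).biUnion D

variable {D : ι → Finset G}

theorem mem_otherBlocks {i : ι} {z : G} : z ∈ otherBlocks D i ↔ ∃ j ≠ i, z ∈ D j := by
  simp [otherBlocks]

theorem ne_of_mem_of_mem_otherBlocks (hD : Pairwise (Disjoint on D)) {i : ι} {x z : G}
    (hx : x ∈ D i) (hz : z ∈ otherBlocks D i) : x ≠ z := by
  obtain ⟨j, hji, hzj⟩ := mem_otherBlocks.mp hz
  rintro rfl
  exact disjoint_left.mp (hD hji) hzj hx

variable [AddCommGroup G]

def HasUniqueExternalDiffs (D : ι → Finset G) : Prop :=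
  Pairwise (Disjoint on D) ∧ ∀ i, ∀ g ≠ (0 : G), extDiffCount (D i) (otherBlocks D i) g = 1

namespace HasUniqueExternalDiffs

theorem exists_sub_eq (hD : HasUniqueExternalDiffs D) (i : ι) {g : G} (hg : g ≠ 0) :
    ∃ x ∈ D i, ∃ z ∈ otherBlocks D i, x - z = g :=
  extDiffCount_ne_zero_iff.mp (by simp [hD.2 i g hg])

theorem eq_and_eq_of_sub_eq_sub (hD : HasUniqueExternalDiffs D) {i : ι} {x₁ x₂ z₁ z₂ : G}
    (hx₁ : x₁ ∈ D i) (hz₁ : z₁ ∈ otherBlocks D i) (hx₂ : x₂ ∈ D i) (hz₂ : z₂ ∈ otherBlocks D i)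
    (h : x₁ - z₁ = x₂ - z₂) : x₁ = x₂ ∧ z₁ = z₂ :=
  eq_and_eq_of_extDiffCount_le_one
    (hD.2 i _ (sub_ne_zero.mpr (ne_of_mem_of_mem_otherBlocks hD.1 hx₁ hz₁))).le
    hx₁ hz₁ rfl hx₂ hz₂ h.symm

theorem exists_sub_eq_sub_of_mem (hD : HasUniqueExternalDiffs D) {i j : ι} (hji : j ≠ i)
    {a b : G} (ha : a ∈ D i) (hb : b ∈ D i) (hab : a ≠ b) :
    ∃ u ∈ D j, ∃ w ∈ D i, w - u = b - a := by
  obtain ⟨u, hu, w, hw, huw⟩ := hD.exists_sub_eq j (sub_ne_zero.mpr hab)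
  by_cases hwi : w ∈ D i
  · exact ⟨u, hu, w, hwi, by rw [← neg_sub, huw, neg_sub]⟩
  -- otherwise `a - u = b - w` represents one element twice from `D i`, forcing `a = b`
  obtain ⟨l, hlj, hwl⟩ := mem_otherBlocks.mp hw
  have hli : l ≠ i := by rintro rfl; exact hwi hwl
  have hu' : u ∈ otherBlocks D i := mem_otherBlocks.mpr ⟨j, hji, hu⟩
  have hw' : w ∈ otherBlocks D i := mem_otherBlocks.mpr ⟨l, hli, hwl⟩
  have hrep : a - u = b - w := by rw [sub_eq_sub_iff_sub_eq_sub, huw]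
  exact absurd (hD.eq_and_eq_of_sub_eq_sub ha hu' hb hw' hrep).1 hab

theorem card_le_one_of_ne (hD : HasUniqueExternalDiffs D) {i j₁ j₂ : ι} (h₁ : j₁ ≠ i)
    (h₂ : j₂ ≠ i) (h₁₂ : j₁ ≠ j₂) : (D i).card ≤ 1 := by
  refine card_le_one.mpr fun a ha b hb => by_contra fun hab => ?_
  obtain ⟨u₁, hu₁, w₁, hw₁, h₁'⟩ := hD.exists_sub_eq_sub_of_mem h₁ ha hb hab
  obtain ⟨u₂, hu₂, w₂, hw₂, h₂'⟩ := hD.exists_sub_eq_sub_of_mem h₂ ha hb hab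
  have hu : u₁ = u₂ := (hD.eq_and_eq_of_sub_eq_sub hw₁ (mem_otherBlocks.mpr ⟨j₁, h₁, hu₁⟩) hw₂
    (mem_otherBlocks.mpr ⟨j₂, h₂, hu₂⟩) (h₁'.trans h₂'.symm)).2
  exact disjoint_left.mp (hD.1 h₁₂) hu₁ (hu ▸ hu₂)

theorem card_le_one (hD : HasUniqueExternalDiffs D) (hι : 3 ≤ Fintype.card ι) (i : ι) :
    (D i).card ≤ 1 := by
  have : 1 < (univ.erase i).card := by rw [card_erase_of_mem (mem_univ i), card_univ]; omega
  obtain ⟨j₁, hj₁, j₂, hj₂, h₁₂⟩ := one_lt_card.mp this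
  exact hD.card_le_one_of_ne (ne_of_mem_erase hj₁) (ne_of_mem_erase hj₂) h₁₂

end HasUniqueExternalDiffs

end Blocks

theorem IsGSEDF.hasUniqueExternalDiffs {G : Type*} [AddCommGroup G] [Fintype G] [DecidableEq G]
    {v m : ℕ} {D : Fin m → Finset G} {k : Fin m → ℕ} (h : IsGSEDF v m D k fun _ => 1) :
    HasUniqueExternalDiffs D := by
  obtain ⟨-, -, -, -, hdisj, hsum⟩ := h
  refine ⟨fun i j hij => hdisj i j hij, fun i g hg => ?_⟩
  rw [otherBlocks, extDiffCount_biUnion fun j _ l _ hjl => hdisj j l hjl]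
  exact hsum i g hg

/-- no GSEDF with all `λ i = 1` exists when `m ≥ 3` and some `k i > 1`. -/
theorem gsedf_all_one_nonexistence {G : Type*} [AddCommGroup G] [Fintype G] (v m : ℕ)
    (hm : 3 ≤ m) (D : Fin m → Finset G) (k : Fin m → ℕ)
    (hbig : ∃ i, 1 < k i) :
    ¬ IsGSEDF v m D k (fun _ => 1) := by
  classical
  intro h
  obtain ⟨i, hi⟩ := hbig
  have hcard : (D i).card ≤ 1 := h.hasUniqueExternalDiffs.card_le_one (by simpa using hm) i
  have := h.2.1 i
  omega
end

section
/- For all positive integers $a,b$, the sets $D_1=\{0,1,\dots,a-1\}$ and $D_2=\{a,2a,\dots,ba\}$ in $\mathbb{Z}_{ab+1}$ form a $(ab+1,2;a,b;1,1)$-GSEDF; i.e., every nonzero element of $\mathbb{Z}_{ab+1}$ can be written uniquely as $d_1-d_2$ with $d_1\in D_1, d_2\in D_2$, and uniquely as $d_2-d_1$. -/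
/-!
In `ℤ_{ab+1}` we have `-ia = (b - i)a + 1`, so `x - ia` is the residue of `x + (b - i)a + 1`;
by division with remainder by `a`, these numbers for `0 ≤ x < a`, `1 ≤ i ≤ b` run through
`1, …, ab`. Hence `D₁ - D₂` covers every nonzero residue, and as `|D₁| |D₂| = ab` is one less
than the group order, each is covered exactly once and `0` not at all. Finally
`Δ(D₂, D₁) = -Δ(D₁, D₂)`.
-/

open Finset

lemma extDiffCount_swap {G : Type*} [AddCommGroup G] (A B : Finset G) (g : G) :
    extDiffCount B A g = extDiffCount A B (-g) := by
  unfold extDiffCount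
  refine card_nbij' Prod.swap Prod.swap ?_ ?_ (fun _ _ => rfl) (fun _ _ => rfl)
  · rintro ⟨x, y⟩ h
    simp only [coe_filter, mem_product, Set.mem_ofPred_eq, Prod.swap_prod_mk] at h ⊢
    exact ⟨h.1.symm, by rw [← h.2, neg_sub]⟩
  · rintro ⟨x, y⟩ h
    simp only [coe_filter, mem_product, Set.mem_ofPred_eq, Prod.swap_prod_mk] at h ⊢
    exact ⟨h.1.symm, by rw [← neg_sub, h.2, neg_neg]⟩

section ExternalDifference

variable {G : Type*} [AddCommGroup G] [Fintype G] [DecidableEq G] {A B : Finset G}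

lemma image_sub_eq_univ_erase_zero (hcard : #A * #B + 1 = Fintype.card G)
    (hsurj : ∀ g ≠ 0, ∃ x ∈ A, ∃ y ∈ B, x - y = g) :
    (A ×ˢ B).image (fun p => p.1 - p.2) = univ.erase 0 := by
  refine (eq_of_subset_of_card_le (fun g hg => ?_) ?_).symm
  · obtain ⟨x, hx, y, hy, rfl⟩ := hsurj g (ne_of_mem_erase hg)
    exact mem_image_of_mem _ (mk_mem_product hx hy)
  · rw [card_erase_of_mem (mem_univ _), card_univ, ← hcard, Nat.add_sub_cancel, ← card_product]
    exact card_image_le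

lemma injOn_sub_of_card_mul_add_one_eq (hcard : #A * #B + 1 = Fintype.card G)
    (hsurj : ∀ g ≠ 0, ∃ x ∈ A, ∃ y ∈ B, x - y = g) :
    Set.InjOn (fun p : G × G => p.1 - p.2) (A ×ˢ B) := by
  rw [← coe_product, ← card_image_iff, image_sub_eq_univ_erase_zero hcard hsurj,
    card_erase_of_mem (mem_univ _), card_univ, ← hcard, card_product, Nat.add_sub_cancel]

lemma disjoint_of_card_mul_add_one_eq (hcard : #A * #B + 1 = Fintype.card G)
    (hsurj : ∀ g ≠ 0, ∃ x ∈ A, ∃ y ∈ B, x - y = g) : Disjoint A B := by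
  refine disjoint_left.2 fun x hxA hxB => ?_
  have h0 := image_sub_eq_univ_erase_zero hcard hsurj ▸
    mem_image_of_mem (fun p : G × G => p.1 - p.2) (mk_mem_product hxA hxB)
  simp at h0

lemma extDiffCount_eq_one_of_card_mul_add_one_eq (hcard : #A * #B + 1 = Fintype.card G)
    (hsurj : ∀ g ≠ 0, ∃ x ∈ A, ∃ y ∈ B, x - y = g) {g : G} (hg : g ≠ 0) :
    extDiffCount A B g = 1 := by
  obtain ⟨x, hx, y, hy, rfl⟩ := hsurj g hg
  have hinj := injOn_sub_of_card_mul_add_one_eq hcard hsurj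
  rw [extDiffCount, card_eq_one]
  refine ⟨(x, y), ext fun p => ?_⟩
  simp only [mem_filter, mem_singleton]
  constructor
  · rintro ⟨hp, hpxy⟩
    exact hinj (by simpa using hp) (by simp [hx, hy]) hpxy
  · rintro rfl
    exact ⟨mk_mem_product hx hy, rfl⟩

end ExternalDifference

lemma ZMod.natCast_injOn_Iio (n : ℕ) : Set.InjOn (Nat.cast : ℕ → ZMod n) (Set.Iio n) := by
  intro x hx y hy h
  rwa [ZMod.natCast_eq_natCast_iff', Nat.mod_eq_of_lt hx, Nat.mod_eq_of_lt hy] at h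

lemma exists_natCast_sub_mul_eq {a b : ℕ} {g : ZMod (a * b + 1)} (hg : g ≠ 0) :
    ∃ x ∈ (range a).image (Nat.cast : ℕ → ZMod (a * b + 1)),
      ∃ y ∈ (Icc 1 b).image (fun i => ((i * a : ℕ) : ZMod (a * b + 1))), x - y = g := by
  set m := g.val
  have hm : 0 < m := (ZMod.val_pos).2 hg
  have hma : m - 1 < b * a := by have := ZMod.val_lt g; rw [Nat.mul_comm]; omega
  have ha : 0 < a := Nat.pos_of_ne_zero (by rintro rfl; simp at hma)
  set q := (m - 1) / a
  set r := (m - 1) % a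
  have hq : q < b := (Nat.div_lt_iff_lt_mul ha).2 hma
  refine ⟨r, mem_image_of_mem _ (mem_range.2 (Nat.mod_lt _ ha)), ((b - q) * a : ℕ),
    mem_image_of_mem _ (mem_Icc.2 ⟨Nat.sub_pos_of_lt hq, Nat.sub_le b q⟩), sub_eq_of_eq_add ?_⟩
  have hdiv : r + a * q = m - 1 := Nat.mod_add_div _ _
  have hqa : q * a ≤ b * a := Nat.mul_le_mul_right a hq.le
  have key : r + (a * b + 1) = m + (b - q) * a := by
    rw [Nat.sub_mul, Nat.mul_comm a b]
    rw [Nat.mul_comm a q] at hdiv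
    omega
  have := congrArg (Nat.cast : ℕ → ZMod (a * b + 1)) key
  rwa [Nat.cast_add r, ZMod.natCast_self, add_zero, Nat.cast_add, ZMod.natCast_zmod_val] at this

lemma card_image_natCast_range {a n : ℕ} (h : a ≤ n) :
    #((range a).image (Nat.cast : ℕ → ZMod n)) = a := by
  rw [card_image_of_injOn ((ZMod.natCast_injOn_Iio n).mono fun x hx => ?_), card_range]
  exact lt_of_lt_of_le (mem_range.1 hx) h

lemma card_image_natCast_mul_Icc {a b : ℕ} (ha : 0 < a) :
    #((Icc 1 b).image fun i => ((i * a : ℕ) : ZMod (a * b + 1))) = b := by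
  have hmul : Set.MapsTo (· * a) (Icc 1 b : Set ℕ) (Set.Iio (a * b + 1)) := fun i hi => by
    have : i * a ≤ b * a := Nat.mul_le_mul_right a (mem_Icc.1 hi).2
    change i * a < a * b + 1
    rw [Nat.mul_comm a b]
    omega
  have hinj : Set.InjOn (fun i => ((i * a : ℕ) : ZMod (a * b + 1))) (Icc 1 b) :=
    (ZMod.natCast_injOn_Iio _).comp (mul_left_injective₀ ha.ne').injOn hmul
  rw [card_image_of_injOn hinj, Nat.card_Icc, Nat.add_sub_cancel]

/-- `D₁ = {0, 1, ..., a-1}` and `D₂ = {a, 2a, ..., ba}` form an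
`(ab+1, 2; a, b; 1, 1)`-GSEDF in `ℤ_{ab+1}`. -/
theorem gsedf_ab_plus_one (a b : ℕ) (ha : 0 < a) (hb : 0 < b) :
    IsGSEDF (a * b + 1) 2
      ![(Finset.range a).image (Nat.cast : ℕ → ZMod (a * b + 1)),
        (Finset.Icc 1 b).image (fun i => ((i * a : ℕ) : ZMod (a * b + 1)))]
      ![a, b] ![1, 1] := by
  set D₁ := (range a).image (Nat.cast : ℕ → ZMod (a * b + 1))
  set D₂ := (Icc 1 b).image fun i => ((i * a : ℕ) : ZMod (a * b + 1))
  have hcard₁ : #D₁ = a := card_image_natCast_range (by nlinarith)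
  have hcard₂ : #D₂ = b := card_image_natCast_mul_Icc ha
  have hcard : #D₁ * #D₂ + 1 = Fintype.card (ZMod (a * b + 1)) := by
    rw [hcard₁, hcard₂, ZMod.card]
  have hsurj : ∀ g ≠ 0, ∃ x ∈ D₁, ∃ y ∈ D₂, x - y = g := fun _ => exists_natCast_sub_mul_eq
  have hdisj := disjoint_of_card_mul_add_one_eq hcard hsurj
  have hcount : ∀ g ≠ 0, extDiffCount D₁ D₂ g = 1 := fun _ =>
    extDiffCount_eq_one_of_card_mul_add_one_eq hcard hsurj
  refine ⟨ZMod.card _, Fin.forall_fin_two.2 ⟨hcard₁, hcard₂⟩, Fin.forall_fin_two.2 ⟨ha, hb⟩,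
    Fin.forall_fin_two.2 ⟨one_pos, one_pos⟩, ?_,
    Fin.forall_fin_two.2 ⟨fun g hg => ?_, fun g hg => ?_⟩⟩
  · simp [Fin.forall_fin_two, hdisj, hdisj.symm]
  · simpa [sum_filter, Fin.sum_univ_two] using hcount g hg
  · simpa [sum_filter, Fin.sum_univ_two, extDiffCount_swap D₂] using
      hcount (-g) (neg_ne_zero.2 hg)
end
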